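/- Lipschitz stability of the state with respect to the coefficient: let u_κ and u_{κ+h} be the nonnegative weak solutions of the state equation −div(κ∇u) = f, −κ∇u·ν = σu^{r−1} with coefficients κ and κ+h in M(α′,β′), respectively, where h ∈ [L^∞(Ω)]^{d×d}. Then α′‖∇(u_{κ+h} − u_κ)‖²_{L²(Ω)} ≤ ‖h‖_{L^∞(Ω)} ‖∇u_{κ+h}‖_{L²(Ω)} ‖∇(u_{κ+h} − u_κ)‖_{L²(Ω)}; in particular ‖∇(u_{κ+h} − u_κ)‖_{L²(Ω)} ≤ C‖h‖_{L^∞(Ω)} with C independent of h. -/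

import Mathlib

open MeasureTheory Filter Set
open scoped RealInnerProductSpace NNReal ENNReal Topology

noncomputable section

abbrev Euc (d : ℕ) := EuclideanSpace ℝ (Fin d)

variable {d : ℕ}

/-- `g` is a weak gradient of `u` on the open set `Ω`. -/
def IsWeakGradient (Ω : Set (Euc d)) (u : Euc d → ℝ) (g : Euc d → Euc d) : Prop :=
  ∀ φ : Euc d → ℝ, ContDiff ℝ (⊤ : ℕ∞) φ → HasCompactSupport φ → tsupport φ ⊆ Ω →
    ∫ x in Ω, u x • gradient φ x = - ∫ x in Ω, φ x • g x

/-- `u` belongs to the Sobolev space `H¹(Ω)`, with weak gradient `g`. -/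
def MemH1 (Ω : Set (Euc d)) (u : Euc d → ℝ) (g : Euc d → Euc d) : Prop :=
  MemLp u 2 (volume.restrict Ω) ∧ MemLp g 2 (volume.restrict Ω) ∧ IsWeakGradient Ω u g

/-- The standard `H¹(Ω)`-norm of `u` (with weak gradient `g`). -/
def H1Norm (Ω : Set (Euc d)) (u : Euc d → ℝ) (g : Euc d → Euc d) : ℝ :=
  Real.sqrt ((∫ x in Ω, (u x) ^ 2) + ∫ x in Ω, ‖g x‖ ^ 2)

/-- `Ω ⊆ ℝ^d` has Lipschitz boundary: near each boundary point, after choosing a unit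
direction `v`, the set `Ω` coincides with the open region above the graph of a Lipschitz
function of the orthogonal variables. -/
def HasLipschitzBoundary (Ω : Set (Euc d)) : Prop :=
  ∀ x ∈ frontier Ω, ∃ v : Euc d, ‖v‖ = 1 ∧ ∃ (K : ℝ≥0) (ψ : Euc d → ℝ), LipschitzWith K ψ ∧
    ∃ r > 0, ∀ y ∈ Metric.ball x r, (y ∈ Ω ↔ ψ (y - ⟪v, y⟫ • v) < ⟪v, y⟫)

/-- A bounded Lipschitz domain `Ω ⊆ ℝ^d` together with the surface measure `σm` on its
boundary `∂Ω = frontier Ω` and the boundary-trace operator `Tr` for Sobolev functions. -/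
structure LipDomain (d : ℕ) where
  Ω : Set (Euc d)
  isOpen : IsOpen Ω
  bounded : Bornology.IsBounded Ω
  nonempty : Ω.Nonempty
  lipschitz : HasLipschitzBoundary Ω
  σm : Measure (Euc d)
  σm_boundary : σm (frontier Ω)ᶜ = 0
  σm_finite : IsFiniteMeasure σm
  σm_pos : σm (frontier Ω) ≠ 0
  Tr : (Euc d → ℝ) → Euc d → ℝ
  tr_add : ∀ u v, Tr (u + v) = Tr u + Tr v
  tr_smul : ∀ (c : ℝ) u, Tr (fun x => c * u x) = fun x => c * Tr u x
  tr_cont : ∀ u, ContinuousOn u (closure Ω) → EqOn (Tr u) u (frontier Ω)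

/-- Membership in the class `M(α,β)` of symmetric, measurable, uniformly elliptic and
bounded matrix fields on `Ω`. -/
def MemM (Ω : Set (Euc d)) (α β : ℝ) (A : Euc d → Euc d →L[ℝ] Euc d) : Prop :=
  (∀ ξ : Euc d, Measurable fun x => A x ξ) ∧
  ∀ x ∈ Ω, (∀ ξ η : Euc d, ⟪A x ξ, η⟫ = ⟪ξ, A x η⟫) ∧
    ∀ ξ : Euc d, α * ‖ξ‖ ^ 2 ≤ ⟪A x ξ, ξ⟫ ∧ ⟪A x ξ, ξ⟫ ≤ β * ‖ξ‖ ^ 2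

/-- The Dirichlet form `a(u,v) = ∫_Ω A ∇u · ∇v dx`, expressed through the weak
gradients `g`, `h` of `u`, `v`. -/
def aForm (Ω : Set (Euc d)) (A : Euc d → Euc d →L[ℝ] Euc d) (g h : Euc d → Euc d) : ℝ :=
  ∫ x in Ω, ⟪A x (g x), h x⟫

/-- The boundary functional `J(u) = ∫_{∂Ω} j(u) dσ`. -/
def Jfun (D : LipDomain d) (j : ℝ → ℝ) (u : Euc d → ℝ) : ℝ :=
  ∫ x, j (D.Tr u x) ∂D.σm

/-- `u ∈ K = {v ∈ H¹(Ω) : j(v) ∈ L¹(∂Ω)}` (with weak gradient `g`). -/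
def MemK (D : LipDomain d) (j : ℝ → ℝ) (u : Euc d → ℝ) (g : Euc d → Euc d) : Prop :=
  MemH1 D.Ω u g ∧ Integrable (fun x => j (D.Tr u x)) D.σm

/-- `F` represents an element of the dual space `V* = (H¹(Ω))*`. -/
def IsDualH1 (Ω : Set (Euc d)) (F : (Euc d → ℝ) → ℝ) : Prop :=
  (∀ u v, F (u + v) = F u + F v) ∧ (∀ (c : ℝ) u, F (fun x => c * u x) = c * F u) ∧
  ∃ C, ∀ u g, MemH1 Ω u g → |F u| ≤ C * H1Norm Ω u g

/-- `u ∈ K` (with weak gradient `g`) is a weak solution of `-div(A∇u) = f` in `Ω`,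
`-A∇u·ν ∈ β(u) = ∂j(u)` on `∂Ω`, in the variational-inequality sense:
`a(u, v-u) + J(v) - J(u) ≥ ⟨f, v-u⟩` for all `v ∈ K`. -/
def IsVISol (D : LipDomain d) (A : Euc d → Euc d →L[ℝ] Euc d) (j : ℝ → ℝ)
    (F : (Euc d → ℝ) → ℝ) (u : Euc d → ℝ) (g : Euc d → Euc d) : Prop :=
  MemK D j u g ∧ ∀ v gv, MemK D j v gv →
    aForm D.Ω A g (gv - g) + Jfun D j v - Jfun D j u ≥ F (v - u)

/-- Weak convergence in `H¹(Ω)`: convergence of the `H¹` inner products against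
every element of `H¹(Ω)`. -/
def WeakH1Conv (Ω : Set (Euc d)) (u : ℕ → Euc d → ℝ) (g : ℕ → Euc d → Euc d)
    (ul : Euc d → ℝ) (gl : Euc d → Euc d) : Prop :=
  ∀ w gw, MemH1 Ω w gw →
    Tendsto (fun n => (∫ x in Ω, u n x * w x) + ∫ x in Ω, ⟪g n x, gw x⟫) atTop
      (𝓝 ((∫ x in Ω, ul x * w x) + ∫ x in Ω, ⟪gl x, gw x⟫))

/-- Weak convergence in `[L²(Ω)]^d`. -/
def WeakL2ConvVec (Ω : Set (Euc d)) (w : ℕ → Euc d → Euc d) (wl : Euc d → Euc d) : Prop :=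
  ∀ z : Euc d → Euc d, MemLp z 2 (volume.restrict Ω) →
    Tendsto (fun n => ∫ x in Ω, ⟪w n x, z x⟫) atTop (𝓝 (∫ x in Ω, ⟪wl x, z x⟫))

/-- Smooth test functions compactly supported in `ω`. -/
def IsTestFun (ω : Set (Euc d)) (φ : Euc d → ℝ) : Prop :=
  ContDiff ℝ (⊤ : ℕ∞) φ ∧ HasCompactSupport φ ∧ tsupport φ ⊆ ω

/-- `u ∈ H¹₀(ω)` (with weak gradient `g`): `u` is an `H¹`-limit of test functions. -/
def MemH10 (ω : Set (Euc d)) (u : Euc d → ℝ) (g : Euc d → Euc d) : Prop :=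
  MemH1 ω u g ∧ ∃ φ : ℕ → Euc d → ℝ, (∀ n, IsTestFun ω (φ n)) ∧
    Tendsto (fun n => (∫ x in ω, (φ n x - u x) ^ 2) + ∫ x in ω, ‖gradient (φ n) x - g x‖ ^ 2)
      atTop (𝓝 0)

/-- `u ∈ H¹₀(ω)` is a weak solution of the Dirichlet problem `-div(A∇u) = f` in `ω`,
where `f ∈ H⁻¹(ω)` is represented by `F`. -/
def IsDirichletSol (ω : Set (Euc d)) (A : Euc d → Euc d →L[ℝ] Euc d)
    (F : (Euc d → ℝ) → ℝ) (u : Euc d → ℝ) (g : Euc d → Euc d) : Prop :=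
  MemH10 ω u g ∧ ∀ φ, IsTestFun ω φ → aForm ω A g (fun x => gradient φ x) = F φ

/-- H-convergence of `Aⁿ` to `Ah` (Murat–Tartar): for every `ω ⋐ Ω` and every
`f ∈ H⁻¹(ω)`, the Dirichlet solutions for `Aⁿ` converge weakly in `H¹₀(ω)`, with weakly
converging fluxes, to the Dirichlet solution for `Ah`. -/
def HConverges (Ω : Set (Euc d)) (A : ℕ → Euc d → Euc d →L[ℝ] Euc d)
    (Ah : Euc d → Euc d →L[ℝ] Euc d) : Prop :=
  ∀ ω : Set (Euc d), IsOpen ω → IsCompact (closure ω) → closure ω ⊆ Ω →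
    ∀ F : (Euc d → ℝ) → ℝ, IsDualH1 ω F →
      ∀ (u : ℕ → Euc d → ℝ) (g : ℕ → Euc d → Euc d) (uh : Euc d → ℝ) (gh : Euc d → Euc d),
        (∀ n : ℕ, IsDirichletSol ω (A n) F (u n) (g n)) →
        IsDirichletSol ω Ah F uh gh →
          WeakH1Conv ω u g uh gh ∧
          WeakL2ConvVec ω (fun n x => A n x (g n x)) (fun x => Ah x (gh x))

/-- The two-phase isotropic coefficient `κ[θ] = α(1-θ) + βθ` (times the identity matrix). -/
def kapCoeff (d : ℕ) (α β : ℝ) (θ : Euc d → ℝ) : Euc d → Euc d →L[ℝ] Euc d :=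
  fun x => (α * (1 - θ x) + β * θ x) • ContinuousLinearMap.id ℝ (Euc d)

/-- `χ` belongs to the classical design domain `CD`: a characteristic function with
volume fraction `γ`. -/
def IsCDChar (Ω : Set (Euc d)) (γ : ℝ) (χ : Euc d → ℝ) : Prop :=
  (∀ᵐ x ∂(volume.restrict Ω), χ x = 0 ∨ χ x = 1) ∧
  (∫ x in Ω, χ x) = γ * (volume Ω).toReal

/-- Weak-* convergence in `L^∞(Ω)`: convergence of the pairings against all `L¹(Ω)`
functions. -/
def WeakStarLinftyConv (Ω : Set (Euc d)) (χ : ℕ → Euc d → ℝ) (θ : Euc d → ℝ) : Prop :=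
  ∀ w : Euc d → ℝ, Integrable w (volume.restrict Ω) →
    Tendsto (fun n => ∫ x in Ω, χ n x * w x) atTop (𝓝 (∫ x in Ω, θ x * w x))

/-- `(θ, Ah)` belongs to the relaxed design domain `RD`. -/
def MemRD (D : LipDomain d) (α β γ : ℝ) (θ : Euc d → ℝ)
    (Ah : Euc d → Euc d →L[ℝ] Euc d) : Prop :=
  (∀ᵐ x ∂(volume.restrict D.Ω), 0 ≤ θ x ∧ θ x ≤ 1) ∧
  (∫ x in D.Ω, θ x) = γ * (volume D.Ω).toReal ∧
  ∃ χ : ℕ → Euc d → ℝ, (∀ n, ∀ᵐ x ∂(volume.restrict D.Ω), χ n x = 0 ∨ χ n x = 1) ∧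
    WeakStarLinftyConv D.Ω χ θ ∧ HConverges D.Ω (fun n => kapCoeff d α β (χ n)) Ah

/-- The set of Dirichlet energies attained by classical designs in `CD`. -/
def CDEnergies (D : LipDomain d) (α β γ : ℝ) (j : ℝ → ℝ) (F : (Euc d → ℝ) → ℝ) : Set ℝ :=
  {t | ∃ χ u g, IsCDChar D.Ω γ χ ∧ IsVISol D (kapCoeff d α β χ) j F u g ∧
        t = aForm D.Ω (kapCoeff d α β χ) g g}

/-- The `V`-norm `‖w‖_V = (‖∇w‖²_{L²(Ω)} + ‖w‖²_{L²(∂Ω)})^{1/2}` (with `gw` the weak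
gradient of `w`). -/
def VNorm (D : LipDomain d) (w : Euc d → ℝ) (gw : Euc d → Euc d) : ℝ :=
  Real.sqrt ((∫ x in D.Ω, ‖gw x‖ ^ 2) + ∫ x, (D.Tr w x) ^ 2 ∂D.σm)

/-- The `L²(Ω)`-norm of a vector field. -/
def L2VNorm (Ω : Set (Euc d)) (g : Euc d → Euc d) : ℝ :=
  Real.sqrt (∫ x in Ω, ‖g x‖ ^ 2)

/-- `u ∈ K` (with weak gradient `g`) is a weak solution of the state equation
`-div(κ∇u) = f` in `Ω`, `-κ∇u·ν = σ|u|^{r-2}u` on `∂Ω`. -/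
def IsStateSol (D : LipDomain d) (κ : Euc d → Euc d →L[ℝ] Euc d) (σc r : ℝ)
    (f : Euc d → ℝ) (u : Euc d → ℝ) (g : Euc d → Euc d) : Prop :=
  MemH1 D.Ω u g ∧ Integrable (fun x => |D.Tr u x| ^ r) D.σm ∧
  ∀ φ gφ, MemH1 D.Ω φ gφ → Integrable (fun x => |D.Tr φ x| ^ r) D.σm →
    aForm D.Ω κ g gφ + σc * (∫ x, |D.Tr u x| ^ (r - 2) * D.Tr u x * D.Tr φ x ∂D.σm)
      = ∫ x in D.Ω, f x * φ x

/-- `v ∈ V` (with weak gradient `gv`) is a weak solution of the adjoint equation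
`-div(κ∇v) = f` in `Ω`, `-κ∇v·ν = σ((r-1)u^{r-2}v + r u^{r-1})` on `∂Ω`. -/
def IsAdjointSol (D : LipDomain d) (κ : Euc d → Euc d →L[ℝ] Euc d) (σc r : ℝ)
    (f : Euc d → ℝ) (u : Euc d → ℝ) (v : Euc d → ℝ) (gv : Euc d → Euc d) : Prop :=
  MemH1 D.Ω v gv ∧
  ∀ φ gφ, MemH1 D.Ω φ gφ →
    aForm D.Ω κ gv gφ +
      σc * (∫ x, ((r - 1) * (D.Tr u x) ^ (r - 2) * D.Tr v x
              + r * (D.Tr u x) ^ (r - 1)) * D.Tr φ x ∂D.σm)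
      = ∫ x in D.Ω, f x * φ x

/-- A symmetric, measurable matrix field `h` on `Ω` with `‖h‖_{L^∞} ≤ M`. -/
def IsSymBdd (Ω : Set (Euc d)) (h : Euc d → Euc d →L[ℝ] Euc d) (M : ℝ) : Prop :=
  (∀ ξ : Euc d, Measurable fun x => h x ξ) ∧
  ∀ x ∈ Ω, (∀ ξ η : Euc d, ⟪h x ξ, η⟫ = ⟪ξ, h x η⟫) ∧ ‖h x‖ ≤ M

/-- `ũ ∈ V` (with weak gradient `gũ`) solves the linearized state equation in the
direction `h`:
`∫ κ∇ũ·∇φ + σ(r-1)∫ u^{r-2} ũ φ dσ = -∫ h∇u·∇φ` for all `φ ∈ V`. -/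
def IsLinStateSol (D : LipDomain d) (κ : Euc d → Euc d →L[ℝ] Euc d) (σc r : ℝ)
    (u : Euc d → ℝ) (gu : Euc d → Euc d) (h : Euc d → Euc d →L[ℝ] Euc d)
    (ut : Euc d → ℝ) (gut : Euc d → Euc d) : Prop :=
  MemH1 D.Ω ut gut ∧
  ∀ φ gφ, MemH1 D.Ω φ gφ →
    aForm D.Ω κ gut gφ +
      σc * (r - 1) * (∫ x, (D.Tr u x) ^ (r - 2) * D.Tr ut x * D.Tr φ x ∂D.σm)
      = - ∫ x in D.Ω, ⟪h x (gu x), gφ x⟫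

/-- `ṽ ∈ V` (with weak gradient `gṽ`) solves the linearized adjoint equation in the
direction `h`. -/
def IsLinAdjointSol (D : LipDomain d) (κ : Euc d → Euc d →L[ℝ] Euc d) (σc r : ℝ)
    (u : Euc d → ℝ) (v : Euc d → ℝ) (gv : Euc d → Euc d)
    (ut : Euc d → ℝ) (h : Euc d → Euc d →L[ℝ] Euc d)
    (vt : Euc d → ℝ) (gvt : Euc d → Euc d) : Prop :=
  MemH1 D.Ω vt gvt ∧
  ∀ φ gφ, MemH1 D.Ω φ gφ →
    aForm D.Ω κ gvt gφ +
      σc * (∫ x, (r * (r - 1) * (D.Tr u x) ^ (r - 2) * D.Tr ut x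
            + (r - 1) * (r - 2) * (D.Tr u x) ^ (r - 3) * D.Tr ut x * D.Tr v x
            + (r - 1) * (D.Tr u x) ^ (r - 2) * D.Tr vt x) * D.Tr φ x ∂D.σm)
      = - ∫ x in D.Ω, ⟪h x (gv x), gφ x⟫

/-- `u ∈ W^{1,p}(Ω)` with weak gradient `g`. -/
def MemW1p (Ω : Set (Euc d)) (p : ℝ) (u : Euc d → ℝ) (g : Euc d → Euc d) : Prop :=
  MemLp u (ENNReal.ofReal p) (volume.restrict Ω) ∧
  MemLp g (ENNReal.ofReal p) (volume.restrict Ω) ∧ IsWeakGradient Ω u g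

/-- `φ ∈ U_ad = {φ ∈ W^{1,p}(Ω) : |φ| ≤ 1 a.e., ‖φ₊‖_{L¹(Ω)} = γ|Ω|}`. -/
def MemUad (Ω : Set (Euc d)) (p γ : ℝ) (φ : Euc d → ℝ) (gφ : Euc d → Euc d) : Prop :=
  MemW1p Ω p φ gφ ∧ (∀ᵐ x ∂(volume.restrict Ω), |φ x| ≤ 1) ∧
  (∫ x in Ω, max (φ x) 0) = γ * (volume Ω).toReal

/-- Weak convergence in `W^{1,p}(Ω)`: convergence of pairings against `L^{p'}(Ω)`
functions (`p' = p/(p-1)`) for the functions and their gradients. -/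
def WeakW1pConv (Ω : Set (Euc d)) (p : ℝ) (φ : ℕ → Euc d → ℝ) (gφ : ℕ → Euc d → Euc d)
    (φl : Euc d → ℝ) (gφl : Euc d → Euc d) : Prop :=
  (∀ w : Euc d → ℝ, MemLp w (ENNReal.ofReal (p / (p - 1))) (volume.restrict Ω) →
    Tendsto (fun n => ∫ x in Ω, φ n x * w x) atTop (𝓝 (∫ x in Ω, φl x * w x))) ∧
  (∀ z : Euc d → Euc d, MemLp z (ENNReal.ofReal (p / (p - 1))) (volume.restrict Ω) →
    Tendsto (fun n => ∫ x in Ω, ⟪gφ n x, z x⟫) atTop (𝓝 (∫ x in Ω, ⟪gφl x, z x⟫)))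


section Statement13Aux

variable {d : ℕ}

private lemma aesm_clm_apply {A : Euc d → Euc d →L[ℝ] Euc d} {μ : Measure (Euc d)}
    (hA : ∀ ξ : Euc d, Measurable fun x => A x ξ) {p : Euc d → Euc d}
    (hp : AEStronglyMeasurable p μ) :
    AEStronglyMeasurable (fun x => A x (p x)) μ := by
  obtain ⟨p₀, hp₀m, hp₀e⟩ := hp
  have hmeas : Measurable fun x => A x (p₀ x) := by
    have hrepr : ∀ x, A x (p₀ x)
        = ∑ i : Fin d, p₀ x i • A x ((EuclideanSpace.basisFun (Fin d) ℝ) i) := by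
      intro x
      conv_lhs => rw [← (EuclideanSpace.basisFun (Fin d) ℝ).sum_repr (p₀ x)]
      rw [map_sum]
      exact Finset.sum_congr rfl fun i _ => by
        rw [_root_.map_smul, EuclideanSpace.basisFun_repr]
    simp only [hrepr]
    exact Finset.measurable_sum _ fun i _ =>
      by
        have hm : Measurable fun x => (p₀ x).ofLp i :=
          (EuclideanSpace.proj i).continuous.measurable.comp hp₀m.measurable
        exact hm.smul (hA _)
  exact ⟨fun x => A x (p₀ x), hmeas.stronglyMeasurable,
    hp₀e.mono fun x hx => by simp only [hx]⟩

private lemma abs_inner_form_le {A : Euc d →L[ℝ] Euc d} {β' : ℝ} (hβ : 0 ≤ β')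
    (hsym : ∀ ξ η : Euc d, ⟪A ξ, η⟫ = ⟪ξ, A η⟫)
    (hlb : ∀ ξ : Euc d, 0 ≤ ⟪A ξ, ξ⟫)
    (hub : ∀ ξ : Euc d, ⟪A ξ, ξ⟫ ≤ β' * ‖ξ‖ ^ 2)
    (ξ η : Euc d) : |⟪A ξ, η⟫| ≤ (β' / 2) * (‖ξ‖ + ‖η‖) ^ 2 := by
  have key : (4 : ℝ) * ⟪A ξ, η⟫ = ⟪A (ξ + η), ξ + η⟫ - ⟪A (ξ - η), ξ - η⟫ := by
    have h1 : ⟪A η, ξ⟫ = ⟪A ξ, η⟫ := by rw [hsym η ξ, real_inner_comm]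
    simp only [map_add, map_sub, inner_add_left, inner_add_right, inner_sub_left,
      inner_sub_right]
    linarith
  have hbnd : ∀ ζ : Euc d, ‖ζ‖ ≤ ‖ξ‖ + ‖η‖ → ⟪A ζ, ζ⟫ ≤ β' * (‖ξ‖ + ‖η‖) ^ 2 := fun ζ hζ =>
    (hub ζ).trans (mul_le_mul_of_nonneg_left (pow_le_pow_left₀ (norm_nonneg ζ) hζ 2) hβ)
  have hplus := hbnd (ξ + η) (norm_add_le ξ η)
  have hminus := hbnd (ξ - η) (norm_sub_le ξ η)
  have lplus := hlb (ξ + η)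
  have lminus := hlb (ξ - η)
  rw [abs_le]
  constructor <;> nlinarith

private lemma integrable_inner_apply {μ : Measure (Euc d)} {A : Euc d → Euc d →L[ℝ] Euc d}
    {p q : Euc d → Euc d} (hp : MemLp p 2 μ) (hq : MemLp q 2 μ)
    (hA : ∀ ξ : Euc d, Measurable fun x => A x ξ) {C : ℝ}
    (hbd : ∀ᵐ x ∂μ, ∀ ξ η : Euc d, |⟪A x ξ, η⟫| ≤ C * (‖ξ‖ + ‖η‖) ^ 2) :
    Integrable (fun x => ⟪A x (p x), q x⟫) μ := by
  have hm : AEStronglyMeasurable (fun x => ⟪A x (p x), q x⟫) μ :=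
    (aesm_clm_apply hA hp.aestronglyMeasurable).inner hq.aestronglyMeasurable
  have hdom : Integrable (fun x => C * (‖p x‖ + ‖q x‖) ^ 2) μ :=
    ((hp.norm.add hq.norm).integrable_sq).const_mul C
  exact hdom.mono' hm (hbd.mono fun x hx => by
    simpa [Real.norm_eq_abs] using hx (p x) (q x))

private lemma integrable_mul_of_L2 {α : Type*} [MeasurableSpace α] {μ : Measure α}
    {F G : α → ℝ} (hF : MemLp F 2 μ) (hG : MemLp G 2 μ) :
    Integrable (fun x => F x * G x) μ := by
  have h1 : MemLp (F • G) 1 μ :=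
    hG.smul hF
  have := memLp_one_iff_integrable.mp h1
  exact this.congr (Eventually.of_forall fun x => by simp [smul_eq_mul])

private lemma integral_mul_le_sqrt_mul_sqrt {α : Type*} [MeasurableSpace α] {μ : Measure α}
    {F G : α → ℝ} (hF : MemLp F 2 μ) (hG : MemLp G 2 μ) :
    ∫ x, F x * G x ∂μ ≤ Real.sqrt (∫ x, F x ^ 2 ∂μ) * Real.sqrt (∫ x, G x ^ 2 ∂μ) := by
  have h2 : ∀ (H : α → ℝ) (hH : MemLp H 2 μ),
      Real.sqrt (∫ x, H x ^ 2 ∂μ) = ‖hH.toLp H‖ := by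
    intro H hH
    have hint : ∫ x, H x ^ 2 ∂μ = (inner (𝕜 := ℝ) (hH.toLp H) (hH.toLp H) : ℝ) := by
      rw [MeasureTheory.L2.inner_def]
      refine (integral_congr_ae ?_).symm
      filter_upwards [hH.coeFn_toLp] with x hx
      simp [hx, RCLike.inner_apply, sq]
    rw [hint, real_inner_self_eq_norm_sq, Real.sqrt_sq (norm_nonneg _)]
  have hFG : ∫ x, F x * G x ∂μ = (inner (𝕜 := ℝ) (hF.toLp F) (hG.toLp G) : ℝ) := by
    rw [MeasureTheory.L2.inner_def]
    refine (integral_congr_ae ?_).symm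
    filter_upwards [hF.coeFn_toLp, hG.coeFn_toLp] with x hx hy
    simp [hx, hy, RCLike.inner_apply, mul_comm]
  rw [hFG, h2 F hF, h2 G hG]
  exact real_inner_le_norm _ _

private lemma abs_rpow_sub_two_mul_self {a r : ℝ} (hr : 2 ≤ r) :
    |a| ^ (r - 2) * a * a = |a| ^ r := by
  rcases eq_or_ne a 0 with h | h
  · simp [h, Real.zero_rpow (show r ≠ 0 by norm_num; linarith)]
  · have ha : 0 < |a| := abs_pos.2 h
    have h1 : a * a = |a| * |a| := (abs_mul_abs_self a).symm
    have hsq : |a| * |a| = |a| ^ (2 : ℝ) := by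
      rw [show ((2 : ℝ)) = ((2 : ℕ) : ℝ) by norm_num, Real.rpow_natCast, sq]
    have h2 : |a| ^ (r - 2) * (|a| * |a|) = |a| ^ r := by
      rw [hsq, ← Real.rpow_add ha]
      congr 1
      ring
    rw [mul_assoc, h1, h2]

private lemma young_pointwise {a b r : ℝ} (hr : 2 ≤ r) :
    |a| ^ (r - 2) * a * b ≤ (r - 1) / r * |a| ^ r + 1 / r * |b| ^ r := by
  have hr0 : (0 : ℝ) < r := by linarith
  have hr1 : (0 : ℝ) < r - 1 := by linarith
  have habs : |a| ^ (r - 2) * a * b ≤ |a| ^ (r - 1) * |b| := by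
    rcases eq_or_ne a 0 with h | h
    · simp [h, Real.zero_rpow (show r - 1 ≠ 0 by linarith),
        Real.rpow_nonneg (le_refl (0:ℝ))]
    · have ha : 0 < |a| := abs_pos.2 h
      have h1 : |a| ^ (r - 2) * |a| = |a| ^ (r - 1) := by
        have h1' : |a| ^ (r - 2) * |a| ^ (1 : ℝ) = |a| ^ (r - 1) := by
          rw [← Real.rpow_add ha]
          congr 1
          ring
        rwa [Real.rpow_one] at h1'
      calc |a| ^ (r - 2) * a * b ≤ |(|a| ^ (r - 2) * a * b)| := le_abs_self _
        _ = |a| ^ (r - 2) * |a| * |b| := by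
            simp [abs_mul, abs_abs, abs_of_nonneg (Real.rpow_nonneg (abs_nonneg a) (r - 2))]
        _ = |a| ^ (r - 1) * |b| := by rw [h1]
  have hconj : Real.HolderConjugate (r / (r - 1)) r := by
    rw [Real.holderConjugate_iff]
    constructor
    · rw [lt_div_iff₀ hr1]; linarith
    · field_simp; ring
  have hyoung := Real.young_inequality_of_nonneg
    (Real.rpow_nonneg (abs_nonneg a) (r - 1)) (abs_nonneg b) hconj
  have hpow : (|a| ^ (r - 1)) ^ (r / (r - 1)) = |a| ^ r := by
    rw [← Real.rpow_mul (abs_nonneg a)]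
    congr 1
    field_simp
  rw [hpow] at hyoung
  have e1 : |a| ^ r / (r / (r - 1)) = (r - 1) / r * |a| ^ r := by
    rw [div_div_eq_mul_div]; ring
  have e2 : |b| ^ r / r = 1 / r * |b| ^ r := by ring
  rw [e1, e2] at hyoung
  linarith

private lemma young_integral {α : Type*} [MeasurableSpace α] {ν : Measure α}
    {a b : α → ℝ} {r : ℝ} (hr : 2 ≤ r)
    (hA : Integrable (fun x => |a x| ^ r) ν) (hB : Integrable (fun x => |b x| ^ r) ν) :
    ∫ x, |a x| ^ (r - 2) * a x * b x ∂ν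
      ≤ (r - 1) / r * ∫ x, |a x| ^ r ∂ν + 1 / r * ∫ x, |b x| ^ r ∂ν := by
  have hr0 : (0 : ℝ) < r := by linarith
  have hA0 : 0 ≤ ∫ x, |a x| ^ r ∂ν :=
    integral_nonneg fun x => Real.rpow_nonneg (abs_nonneg _) _
  have hB0 : 0 ≤ ∫ x, |b x| ^ r ∂ν :=
    integral_nonneg fun x => Real.rpow_nonneg (abs_nonneg _) _
  by_cases hm : AEStronglyMeasurable (fun x => |a x| ^ (r - 2) * a x * b x) ν
  · have hgint : Integrable (fun x => (r - 1) / r * |a x| ^ r + 1 / r * |b x| ^ r) ν :=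
      (hA.const_mul _).add (hB.const_mul _)
    have hfle : ∀ x, ‖|a x| ^ (r - 2) * a x * b x‖
        ≤ (r - 1) / r * |a x| ^ r + 1 / r * |b x| ^ r := by
      intro x
      have h1 := young_pointwise (a := |a x|) (b := |b x|) hr
      simp only [abs_abs] at h1
      have h2 : ‖|a x| ^ (r - 2) * a x * b x‖ = |a x| ^ (r - 2) * |a x| * |b x| := by
        simp [Real.norm_eq_abs, abs_mul, abs_abs,
          abs_of_nonneg (Real.rpow_nonneg (abs_nonneg (a x)) (r - 2))]
      rw [h2]
      exact h1
    have hint : Integrable (fun x => |a x| ^ (r - 2) * a x * b x) ν :=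
      hgint.mono' hm (ae_of_all _ hfle)
    have hmono := integral_mono_ae hint hgint (ae_of_all _ fun x => young_pointwise hr)
    rwa [integral_add (hA.const_mul _) (hB.const_mul _), integral_const_mul,
      integral_const_mul] at hmono
  · rw [integral_non_aestronglyMeasurable hm]
    have c1 : (0 : ℝ) ≤ (r - 1) / r := div_nonneg (by linarith) hr0.le
    have c2 : (0 : ℝ) ≤ 1 / r := div_nonneg zero_le_one hr0.le
    nlinarith

end Statement13Aux

/-- Lipschitz stability of the state with respect to the coefficient:
for `κ, κ+h ∈ M(α',β')`,
`α'‖∇(u_{κ+h}-u_κ)‖² ≤ ‖h‖_{L^∞}‖∇u_{κ+h}‖‖∇(u_{κ+h}-u_κ)‖`, and in particular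
`‖∇(u_{κ+h}-u_κ)‖_{L²(Ω)} ≤ C‖h‖_{L^∞}` with `C` independent of `h`. -/
theorem statement13 (d : ℕ) (D : LipDomain d) (α' β' : ℝ) (hα' : 0 < α') (hαβ' : α' < β')
    (κ : Euc d → Euc d →L[ℝ] Euc d) (hκ : MemM D.Ω α' β' κ)
    (σc r : ℝ) (hσ : 0 < σc) (hr : 2 ≤ r)
    (f : Euc d → ℝ) (hf2 : MemLp f 2 (volume.restrict D.Ω))
    (hfpos : ∀ᵐ x ∂(volume.restrict D.Ω), 0 ≤ f x)
    (u : Euc d → ℝ) (gu : Euc d → Euc d) (hu : IsStateSol D κ σc r f u gu)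
    (hupos : ∀ᵐ x ∂(volume.restrict D.Ω), 0 ≤ u x) :
    -- the basic inequality
    (∀ (h : Euc d → Euc d →L[ℝ] Euc d) (M : ℝ), 0 < M → IsSymBdd D.Ω h M →
      MemM D.Ω α' β' (fun x => κ x + h x) →
      ∀ u' g', IsStateSol D (fun x => κ x + h x) σc r f u' g' →
        (∀ᵐ x ∂(volume.restrict D.Ω), 0 ≤ u' x) →
        α' * L2VNorm D.Ω (fun x => g' x - gu x) ^ 2 ≤
          M * L2VNorm D.Ω g' * L2VNorm D.Ω (fun x => g' x - gu x)) ∧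
    -- Lipschitz estimate with a constant independent of `h`
    (∃ C, ∀ (h : Euc d → Euc d →L[ℝ] Euc d) (M : ℝ), 0 < M → IsSymBdd D.Ω h M →
      MemM D.Ω α' β' (fun x => κ x + h x) →
      ∀ u' g', IsStateSol D (fun x => κ x + h x) σc r f u' g' →
        (∀ᵐ x ∂(volume.restrict D.Ω), 0 ≤ u' x) →
        L2VNorm D.Ω (fun x => g' x - gu x) ≤ C * M) := by
  classical
  have hΩmeas : MeasurableSet D.Ω := D.isOpen.measurableSet
  have haeΩ : ∀ᵐ x ∂(volume.restrict D.Ω), x ∈ D.Ω := ae_restrict_mem hΩmeas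
  obtain ⟨⟨hu2, hgu2, hwgu⟩, huint, hueq⟩ := hu
  have hβ0 : (0 : ℝ) ≤ β' := by linarith
  have hbκ : ∀ᵐ x ∂(volume.restrict D.Ω), ∀ ξ η : Euc d,
      |⟪κ x ξ, η⟫| ≤ (β' / 2) * (‖ξ‖ + ‖η‖) ^ 2 := by
    filter_upwards [haeΩ] with x hx
    obtain ⟨hsym, hbd⟩ := hκ.2 x hx
    exact abs_inner_form_le hβ0 hsym
      (fun ξ => le_trans (mul_nonneg hα'.le (sq_nonneg _)) (hbd ξ).1)
      (fun ξ => (hbd ξ).2)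
  have master : ∀ (h : Euc d → Euc d →L[ℝ] Euc d) (M : ℝ), 0 < M → IsSymBdd D.Ω h M →
      MemM D.Ω α' β' (fun x => κ x + h x) →
      ∀ u' g', IsStateSol D (fun x => κ x + h x) σc r f u' g' →
        (α' * L2VNorm D.Ω (fun x => g' x - gu x) ^ 2 ≤
            M * L2VNorm D.Ω g' * L2VNorm D.Ω (fun x => g' x - gu x)) ∧
        (α' * L2VNorm D.Ω (fun x => g' x - gu x) ^ 2 ≤
            M * L2VNorm D.Ω gu * L2VNorm D.Ω (fun x => g' x - gu x)) := by
    intro h M hM hsb hκ' u' g' hu'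
    obtain ⟨⟨hu'2, hg'2, hwg'⟩, hu'int, hu'eq⟩ := hu'
    have hgd2 : MemLp (fun x => g' x - gu x) 2 (volume.restrict D.Ω) := hg'2.sub hgu2
    -- pointwise bounds on the coefficients
    have hbκ' : ∀ᵐ x ∂(volume.restrict D.Ω), ∀ ξ η : Euc d,
        |⟪(κ x + h x) ξ, η⟫| ≤ (β' / 2) * (‖ξ‖ + ‖η‖) ^ 2 := by
      filter_upwards [haeΩ] with x hx
      obtain ⟨hsym, hbd⟩ := hκ'.2 x hx
      exact abs_inner_form_le hβ0 hsym
        (fun ξ => le_trans (mul_nonneg hα'.le (sq_nonneg _)) (hbd ξ).1)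
        (fun ξ => (hbd ξ).2)
    have hbh : ∀ᵐ x ∂(volume.restrict D.Ω), ∀ ξ η : Euc d,
        |⟪h x ξ, η⟫| ≤ M * (‖ξ‖ + ‖η‖) ^ 2 := by
      filter_upwards [haeΩ] with x hx
      intro ξ η
      have h1 : |⟪h x ξ, η⟫| ≤ ‖h x ξ‖ * ‖η‖ := abs_real_inner_le_norm _ _
      have h2 : ‖h x ξ‖ ≤ M * ‖ξ‖ := le_trans ((h x).le_opNorm ξ)
        (mul_le_mul_of_nonneg_right ((hsb.2 x hx).2) (norm_nonneg ξ))
      nlinarith [norm_nonneg ξ, norm_nonneg η, norm_nonneg (h x ξ),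
        mul_le_mul_of_nonneg_right h2 (norm_nonneg η),
        mul_nonneg hM.le (mul_nonneg (norm_nonneg ξ) (norm_nonneg ξ)),
        mul_nonneg hM.le (mul_nonneg (norm_nonneg ξ) (norm_nonneg η)),
        mul_nonneg hM.le (mul_nonneg (norm_nonneg η) (norm_nonneg η))]
    have hbhsharp : ∀ (p : Euc d → Euc d), ∀ᵐ x ∂(volume.restrict D.Ω),
        ‖⟪h x (p x), g' x - gu x⟫‖ ≤ M * (‖p x‖ * ‖g' x - gu x‖) := by
      intro p
      filter_upwards [haeΩ] with x hx
      rw [Real.norm_eq_abs]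
      have h1 : |⟪h x (p x), g' x - gu x⟫| ≤ ‖h x (p x)‖ * ‖g' x - gu x‖ :=
        abs_real_inner_le_norm _ _
      have h2 : ‖h x (p x)‖ ≤ M * ‖p x‖ := le_trans ((h x).le_opNorm _)
        (mul_le_mul_of_nonneg_right ((hsb.2 x hx).2) (norm_nonneg _))
      nlinarith [norm_nonneg (p x), norm_nonneg (g' x - gu x),
        mul_le_mul_of_nonneg_right h2 (norm_nonneg (g' x - gu x))]
    -- integrability of all the inner-product integrands
    have I1 : Integrable (fun x => ⟪κ x (gu x), g' x⟫) (volume.restrict D.Ω) :=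
      integrable_inner_apply hgu2 hg'2 hκ.1 hbκ
    have I2 : Integrable (fun x => ⟪κ x (gu x), gu x⟫) (volume.restrict D.Ω) :=
      integrable_inner_apply hgu2 hgu2 hκ.1 hbκ
    have I3 : Integrable (fun x => ⟪(κ x + h x) (g' x), gu x⟫) (volume.restrict D.Ω) :=
      integrable_inner_apply hg'2 hgu2 hκ'.1 hbκ'
    have I4 : Integrable (fun x => ⟪(κ x + h x) (g' x), g' x⟫) (volume.restrict D.Ω) :=
      integrable_inner_apply hg'2 hg'2 hκ'.1 hbκ'
    have I5 : Integrable (fun x => ⟪κ x (g' x - gu x), g' x - gu x⟫) (volume.restrict D.Ω) :=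
      integrable_inner_apply hgd2 hgd2 hκ.1 hbκ
    have I6 : Integrable (fun x => ⟪h x (g' x), g' x - gu x⟫) (volume.restrict D.Ω) :=
      integrable_inner_apply hg'2 hgd2 hsb.1 hbh
    have I7 : Integrable
        (fun x => ⟪(κ x + h x) (g' x - gu x), g' x - gu x⟫) (volume.restrict D.Ω) :=
      integrable_inner_apply hgd2 hgd2 hκ'.1 hbκ'
    have I8 : Integrable (fun x => ⟪h x (gu x), g' x - gu x⟫) (volume.restrict D.Ω) :=
      integrable_inner_apply hgu2 hgd2 hsb.1 hbh
    have I9 : Integrable (fun x => ⟪(κ x + h x) (g' x), g' x - gu x⟫) (volume.restrict D.Ω) :=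
      integrable_inner_apply hg'2 hgd2 hκ'.1 hbκ'
    have I10 : Integrable (fun x => ⟪κ x (gu x), g' x - gu x⟫) (volume.restrict D.Ω) :=
      integrable_inner_apply hgu2 hgd2 hκ.1 hbκ
    -- the four tested equations
    have E1 := hueq u' g' ⟨hu'2, hg'2, hwg'⟩ hu'int
    have E2 := hueq u gu ⟨hu2, hgu2, hwgu⟩ huint
    have E3 := hu'eq u gu ⟨hu2, hgu2, hwgu⟩ huint
    have E4 := hu'eq u' g' ⟨hu'2, hg'2, hwg'⟩ hu'int
    rw [show (∫ x, |D.Tr u x| ^ (r - 2) * D.Tr u x * D.Tr u x ∂D.σm)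
        = ∫ x, |D.Tr u x| ^ r ∂D.σm from
      integral_congr_ae (Eventually.of_forall fun x => abs_rpow_sub_two_mul_self hr)] at E2
    rw [show (∫ x, |D.Tr u' x| ^ (r - 2) * D.Tr u' x * D.Tr u' x ∂D.σm)
        = ∫ x, |D.Tr u' x| ^ r ∂D.σm from
      integral_congr_ae (Eventually.of_forall fun x => abs_rpow_sub_two_mul_self hr)] at E4
    -- boundary monotonicity via Young's inequality
    have hP := young_integral hr huint hu'int
    have hR := young_integral hr hu'int huint
    have hbdy : (∫ x, |D.Tr u x| ^ (r - 2) * D.Tr u x * D.Tr u' x ∂D.σm)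
        + (∫ x, |D.Tr u' x| ^ (r - 2) * D.Tr u' x * D.Tr u x ∂D.σm)
        ≤ (∫ x, |D.Tr u x| ^ r ∂D.σm) + ∫ x, |D.Tr u' x| ^ r ∂D.σm := by
      have hr0 : (0 : ℝ) < r := by linarith
      have hcd : (r - 1) / r + 1 / r = 1 := by field_simp; ring
      set Q := ∫ x, |D.Tr u x| ^ r ∂D.σm with hQdef
      set S := ∫ x, |D.Tr u' x| ^ r ∂D.σm with hSdef
      calc (∫ x, |D.Tr u x| ^ (r - 2) * D.Tr u x * D.Tr u' x ∂D.σm)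
            + (∫ x, |D.Tr u' x| ^ (r - 2) * D.Tr u' x * D.Tr u x ∂D.σm)
          ≤ ((r - 1) / r * Q + 1 / r * S) + ((r - 1) / r * S + 1 / r * Q) := add_le_add hP hR
        _ = ((r - 1) / r + 1 / r) * Q + ((r - 1) / r + 1 / r) * S := by ring
        _ = Q + S := by rw [hcd, one_mul, one_mul]
    have hσbdy : σc * (∫ x, |D.Tr u x| ^ (r - 2) * D.Tr u x * D.Tr u' x ∂D.σm)
        + σc * (∫ x, |D.Tr u' x| ^ (r - 2) * D.Tr u' x * D.Tr u x ∂D.σm)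
        ≤ σc * (∫ x, |D.Tr u x| ^ r ∂D.σm) + σc * ∫ x, |D.Tr u' x| ^ r ∂D.σm := by
      have := mul_le_mul_of_nonneg_left hbdy hσ.le
      rw [mul_add, mul_add] at this
      exact this
    have hcomb : aForm D.Ω (fun x => κ x + h x) g' g' + aForm D.Ω κ gu gu
        - aForm D.Ω κ gu g' - aForm D.Ω (fun x => κ x + h x) g' gu ≤ 0 := by
      linarith [E1, E2, E3, E4, hσbdy]
    -- splitting the combined Dirichlet forms
    have h43 : aForm D.Ω (fun x => κ x + h x) g' g'
        - aForm D.Ω (fun x => κ x + h x) g' gu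
        = ∫ x in D.Ω, ⟪(κ x + h x) (g' x), g' x - gu x⟫ := by
      unfold aForm
      rw [← integral_sub I4 I3]
      exact integral_congr_ae (Eventually.of_forall fun x => (inner_sub_right _ _ _).symm)
    have h12 : aForm D.Ω κ gu g' - aForm D.Ω κ gu gu
        = ∫ x in D.Ω, ⟪κ x (gu x), g' x - gu x⟫ := by
      unfold aForm
      rw [← integral_sub I1 I2]
      exact integral_congr_ae (Eventually.of_forall fun x => (inner_sub_right _ _ _).symm)
    have hdiff1 : (∫ x in D.Ω, ⟪(κ x + h x) (g' x), g' x - gu x⟫)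
        - ∫ x in D.Ω, ⟪κ x (gu x), g' x - gu x⟫
        = (∫ x in D.Ω, ⟪κ x (g' x - gu x), g' x - gu x⟫)
          + ∫ x in D.Ω, ⟪h x (g' x), g' x - gu x⟫ := by
      rw [← integral_sub I9 I10, ← integral_add I5 I6]
      refine integral_congr_ae (Eventually.of_forall fun x => ?_)
      simp only [ContinuousLinearMap.add_apply, map_sub, inner_add_left, inner_sub_left]
      ring
    have hdiff2 : (∫ x in D.Ω, ⟪(κ x + h x) (g' x), g' x - gu x⟫)
        - ∫ x in D.Ω, ⟪κ x (gu x), g' x - gu x⟫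
        = (∫ x in D.Ω, ⟪(κ x + h x) (g' x - gu x), g' x - gu x⟫)
          + ∫ x in D.Ω, ⟪h x (gu x), g' x - gu x⟫ := by
      rw [← integral_sub I9 I10, ← integral_add I7 I8]
      refine integral_congr_ae (Eventually.of_forall fun x => ?_)
      simp only [ContinuousLinearMap.add_apply, map_sub, inner_add_left, inner_sub_left]
      ring
    -- ellipticity
    have hNsq : L2VNorm D.Ω (fun x => g' x - gu x) ^ 2
        = ∫ x in D.Ω, ‖g' x - gu x‖ ^ 2 :=
      Real.sq_sqrt (integral_nonneg fun x => sq_nonneg _)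
    have hell : α' * (∫ x in D.Ω, ‖g' x - gu x‖ ^ 2)
        ≤ ∫ x in D.Ω, ⟪κ x (g' x - gu x), g' x - gu x⟫ := by
      rw [← integral_const_mul]
      refine integral_mono_ae ((hgd2.norm.integrable_sq).const_mul α') I5 ?_
      filter_upwards [haeΩ] with x hx
      exact (((hκ.2 x hx).2 _)).1
    have hell' : α' * (∫ x in D.Ω, ‖g' x - gu x‖ ^ 2)
        ≤ ∫ x in D.Ω, ⟪(κ x + h x) (g' x - gu x), g' x - gu x⟫ := by
      rw [← integral_const_mul]
      refine integral_mono_ae ((hgd2.norm.integrable_sq).const_mul α') I7 ?_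
      filter_upwards [haeΩ] with x hx
      exact (((hκ'.2 x hx).2 _)).1
    -- Hölder / Cauchy–Schwarz bounds
    have hH : ∀ (p : Euc d → Euc d), MemLp p 2 (volume.restrict D.Ω) →
        Integrable (fun x => ⟪h x (p x), g' x - gu x⟫) (volume.restrict D.Ω) →
        - (∫ x in D.Ω, ⟪h x (p x), g' x - gu x⟫)
          ≤ M * L2VNorm D.Ω p * L2VNorm D.Ω (fun x => g' x - gu x) := by
      intro p hp2 Ip
      have habs1 : |∫ x in D.Ω, ⟪h x (p x), g' x - gu x⟫|
          ≤ ∫ x in D.Ω, M * (‖p x‖ * ‖g' x - gu x‖) := by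
        calc |∫ x in D.Ω, ⟪h x (p x), g' x - gu x⟫|
            ≤ ∫ x in D.Ω, ‖⟪h x (p x), g' x - gu x⟫‖ := by
              rw [← Real.norm_eq_abs]
              exact norm_integral_le_integral_norm _
          _ ≤ ∫ x in D.Ω, M * (‖p x‖ * ‖g' x - gu x‖) :=
              integral_mono_ae Ip.norm
                ((integrable_mul_of_L2 hp2.norm hgd2.norm).const_mul M) (hbhsharp p)
      have hcs : (∫ x in D.Ω, ‖p x‖ * ‖g' x - gu x‖)
          ≤ L2VNorm D.Ω p * L2VNorm D.Ω (fun x => g' x - gu x) :=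
        integral_mul_le_sqrt_mul_sqrt hp2.norm hgd2.norm
      have heq : (∫ x in D.Ω, M * (‖p x‖ * ‖g' x - gu x‖))
          = M * ∫ x in D.Ω, ‖p x‖ * ‖g' x - gu x‖ := integral_const_mul M _
      have h1 : - (∫ x in D.Ω, ⟪h x (p x), g' x - gu x⟫)
          ≤ |∫ x in D.Ω, ⟪h x (p x), g' x - gu x⟫| := neg_le.mpr (neg_abs_le _)
      have h2 := mul_le_mul_of_nonneg_left hcs hM.le
      rw [heq] at habs1
      linarith
    have key : (∫ x in D.Ω, ⟪κ x (g' x - gu x), g' x - gu x⟫)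
        ≤ - ∫ x in D.Ω, ⟪h x (g' x), g' x - gu x⟫ := by
      linarith [hcomb, h43, h12, hdiff1]
    have key' : (∫ x in D.Ω, ⟪(κ x + h x) (g' x - gu x), g' x - gu x⟫)
        ≤ - ∫ x in D.Ω, ⟪h x (gu x), g' x - gu x⟫ := by
      linarith [hcomb, h43, h12, hdiff2]
    constructor
    · calc α' * L2VNorm D.Ω (fun x => g' x - gu x) ^ 2
          = α' * ∫ x in D.Ω, ‖g' x - gu x‖ ^ 2 := by rw [hNsq]
        _ ≤ ∫ x in D.Ω, ⟪κ x (g' x - gu x), g' x - gu x⟫ := hell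
        _ ≤ - ∫ x in D.Ω, ⟪h x (g' x), g' x - gu x⟫ := key
        _ ≤ M * L2VNorm D.Ω g' * L2VNorm D.Ω (fun x => g' x - gu x) := hH g' hg'2 I6
    · calc α' * L2VNorm D.Ω (fun x => g' x - gu x) ^ 2
          = α' * ∫ x in D.Ω, ‖g' x - gu x‖ ^ 2 := by rw [hNsq]
        _ ≤ ∫ x in D.Ω, ⟪(κ x + h x) (g' x - gu x), g' x - gu x⟫ := hell'
        _ ≤ - ∫ x in D.Ω, ⟪h x (gu x), g' x - gu x⟫ := key'
        _ ≤ M * L2VNorm D.Ω gu * L2VNorm D.Ω (fun x => g' x - gu x) := hH gu hgu2 I8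
  refine ⟨fun h M hM hsb hκ' u' g' hu' _ => (master h M hM hsb hκ' u' g' hu').1,
    ⟨L2VNorm D.Ω gu / α', fun h M hM hsb hκ' u' g' hu' _ => ?_⟩⟩
  have h2 := (master h M hM hsb hκ' u' g' hu').2
  have hN0 : 0 ≤ L2VNorm D.Ω (fun x => g' x - gu x) := Real.sqrt_nonneg _
  have hNu0 : 0 ≤ L2VNorm D.Ω gu := Real.sqrt_nonneg _
  rcases eq_or_lt_of_le hN0 with h0 | h0
  · rw [← h0]
    exact mul_nonneg (div_nonneg hNu0 hα'.le) hM.le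
  · rw [div_mul_eq_mul_div, le_div_iff₀ hα']
    nlinarith [h2, h0, hNu0, hM]

end
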